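/- For reals β, T > 0 and integers N ≥ 2, set θ_N = β(N+1)T/(N−1) and define the cost of anarchy CoA(N, β, T) = (βT+2) · N²(N+1)·( ((βT + 1/2)(N+1) + 3)·e^{2θ_N} − (2(N−1)/N²)·(N e^{θ_N} + 1/4) ) / ( N((βT+1)(N+1)+2)e^{θ_N} − (N−1) )² − 1. Then: (i) for fixed β, T > 0, CoA(N, β, T) → βT/(2(βT+1)²) as N → ∞; (ii) for fixed integer N ≥ 2 and T > 0, CoA(N, β, T) → 0 as β → 0⁺ and CoA(N, β, T) → 0 as β → ∞. -/

import Mathlib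

open Filter Topology

/-- The (relative, excess) system cost of anarchy
`CoA(N, β, T) = PIC_N(x)/PIC_1(x) − 1`, independent of `x ≠ 0` and of `λ`. -/
noncomputable def CoA (N : ℕ) (β T : ℝ) : ℝ :=
  (β * T + 2) * ((N : ℝ) ^ 2 * ((N : ℝ) + 1)
      * (((β * T + 1 / 2) * ((N : ℝ) + 1) + 3)
          * Real.exp (2 * (β * ((N : ℝ) + 1) * T / ((N : ℝ) - 1)))
        - 2 * ((N : ℝ) - 1) / (N : ℝ) ^ 2
          * ((N : ℝ) * Real.exp (β * ((N : ℝ) + 1) * T / ((N : ℝ) - 1)) + 1 / 4))) /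
    ((N : ℝ) * ((β * T + 1) * ((N : ℝ) + 1) + 2)
        * Real.exp (β * ((N : ℝ) + 1) * T / ((N : ℝ) - 1)) - ((N : ℝ) - 1)) ^ 2 - 1

lemma div_aux (a b g : ℝ) (hg : g ≠ 0) : a / b = (a / g) / (b / g) := by
  rcases eq_or_ne b 0 with h | h
  · simp [h]
  · field_simp

lemma lin_div (a b : ℝ) : Tendsto (fun x : ℝ => (x * a + b) / x) atTop (𝓝 a) := by
  have h : Tendsto (fun x : ℝ => a + b * x⁻¹) atTop (𝓝 (a + b * 0)) :=
    tendsto_const_nhds.add (tendsto_inv_atTop_zero.const_mul b)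
  rw [mul_zero, add_zero] at h
  refine h.congr' ?_
  filter_upwards [eventually_gt_atTop 0] with x hx
  field_simp

lemma lin_div_sq (a b : ℝ) : Tendsto (fun x : ℝ => (x * a + b) / x ^ 2) atTop (𝓝 0) := by
  have h : Tendsto (fun x : ℝ => a * x⁻¹ + b * (x⁻¹ * x⁻¹)) atTop
      (𝓝 (a * 0 + b * (0 * 0))) :=
    (tendsto_inv_atTop_zero.const_mul a).add
      ((tendsto_inv_atTop_zero.mul tendsto_inv_atTop_zero).const_mul b)
  norm_num at h
  refine h.congr' ?_
  filter_upwards [eventually_gt_atTop 0] with x hx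
  field_simp

/-- Limits of the cost of anarchy: (i) for fixed `β, T > 0`,
`CoA(N, β, T) → βT/(2(βT+1)²)` as `N → ∞`; (ii) for fixed `N ≥ 2` and `T > 0`,
`CoA(N, β, T) → 0` both as `β → 0⁺` and as `β → ∞`. -/
theorem CoA_limits :
    (∀ β T : ℝ, 0 < β → 0 < T →
      Tendsto (fun N : ℕ => CoA N β T) atTop (𝓝 (β * T / (2 * (β * T + 1) ^ 2)))) ∧
    (∀ N : ℕ, 2 ≤ N → ∀ T : ℝ, 0 < T →
      Tendsto (fun β : ℝ => CoA N β T) (𝓝[>] 0) (𝓝 0) ∧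
      Tendsto (fun β : ℝ => CoA N β T) atTop (𝓝 0)) := by
  constructor
  · intro β T hβ hT
    have h1x : Tendsto (fun x : ℝ => 1 / x) atTop (𝓝 0) :=
      tendsto_inv_atTop_zero.congr (fun x => (one_div x).symm)
    have hratio : Tendsto (fun x : ℝ => (x + 1) / (x - 1)) atTop (𝓝 1) := by
      have h : Tendsto (fun x : ℝ => (1 + x⁻¹) / (1 - x⁻¹)) atTop (𝓝 ((1 + 0) / (1 - 0))) :=
        Tendsto.div (tendsto_const_nhds.add tendsto_inv_atTop_zero)
          (tendsto_const_nhds.sub tendsto_inv_atTop_zero) (by norm_num)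
      norm_num at h
      refine h.congr' ?_
      filter_upwards [eventually_gt_atTop 1] with x hx
      have hx0 : x ≠ 0 := by linarith
      have hx1 : x - 1 ≠ 0 := by intro h; apply hx.ne'; linarith
      field_simp
    have hθ : Tendsto (fun x : ℝ => β * (x + 1) * T / (x - 1)) atTop (𝓝 (β * T)) := by
      have h := hratio.const_mul (β * T)
      rw [mul_one] at h
      exact h.congr (fun x => by ring)
    have hE : Tendsto (fun x : ℝ => Real.exp (β * (x + 1) * T / (x - 1))) atTop
        (𝓝 (Real.exp (β * T))) := (Real.continuous_exp.tendsto _).comp hθ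
    have hE2 : Tendsto (fun x : ℝ => Real.exp (2 * (β * (x + 1) * T / (x - 1)))) atTop
        (𝓝 (Real.exp (2 * (β * T)))) := (Real.continuous_exp.tendsto _).comp (hθ.const_mul 2)
    have hq : Tendsto (fun x : ℝ => 2 * (x - 1) / x ^ 2) atTop (𝓝 0) :=
      (lin_div_sq 2 (-2)).congr (fun x => by ring_nf)
    have hq2 : Tendsto (fun x : ℝ => (x - 1) / x ^ 2) atTop (𝓝 0) :=
      (lin_div_sq 1 (-1)).congr (fun x => by ring_nf)
    set Gn : ℝ → ℝ := fun x => (1 + 1 / x) *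
        (((β * T + 1 / 2) * (1 + 1 / x) + 3 / x) * Real.exp (2 * (β * (x + 1) * T / (x - 1)))
          - 2 * (x - 1) / x ^ 2
              * (Real.exp (β * (x + 1) * T / (x - 1)) + 1 / (4 * x))) with hGnDef
    set Gd : ℝ → ℝ := fun x =>
        (((β * T + 1) * (1 + 1 / x) + 2 / x) * Real.exp (β * (x + 1) * T / (x - 1))
          - (x - 1) / x ^ 2) ^ 2 with hGdDef
    have hGn : Tendsto Gn atTop (𝓝 ((β * T + 1 / 2) * Real.exp (2 * (β * T)))) := by
      have h : Tendsto Gn atTop (𝓝 ((1 + 0) *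
          (((β * T + 1 / 2) * (1 + 0) + 0) * Real.exp (2 * (β * T))
            - 0 * (Real.exp (β * T) + 0)))) := by
        refine Tendsto.mul (tendsto_const_nhds.add h1x) ?_
        refine Tendsto.sub ?_ (hq.mul (hE.add ?_))
        · refine Tendsto.mul ?_ hE2
          refine Tendsto.add (Tendsto.const_mul _ (tendsto_const_nhds.add h1x)) ?_
          have h3 := h1x.const_mul 3
          rw [mul_zero] at h3
          exact h3.congr (fun x => by ring)
        · have h4 : Tendsto (fun x : ℝ => (1 / 4) * (1 / x)) atTop (𝓝 ((1/4) * 0)) :=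
            h1x.const_mul (1 / 4)
          rw [mul_zero] at h4
          exact h4.congr (fun x => by rw [div_mul_div_comm, one_mul])
      have : (1 + (0:ℝ)) * (((β * T + 1 / 2) * (1 + 0) + 0) * Real.exp (2 * (β * T))
            - 0 * (Real.exp (β * T) + 0)) = (β * T + 1 / 2) * Real.exp (2 * (β * T)) := by ring
      rwa [this] at h
    have hGd : Tendsto Gd atTop (𝓝 (((β * T + 1) * Real.exp (β * T)) ^ 2)) := by
      have h : Tendsto Gd atTop (𝓝 ((((β * T + 1) * (1 + 0) + 0) * Real.exp (β * T) - 0) ^ 2)) := by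
        refine Tendsto.pow (Tendsto.sub (Tendsto.mul ?_ hE) hq2) 2
        refine Tendsto.add (Tendsto.const_mul _ (tendsto_const_nhds.add h1x)) ?_
        have h2 := h1x.const_mul 2
        rw [mul_zero] at h2
        exact h2.congr (fun x => by ring)
      have : (((β * T + 1) * (1 + 0) + 0) * Real.exp (β * T) - 0) ^ 2
          = ((β * T + 1) * Real.exp (β * T)) ^ 2 := by ring
      rwa [this] at h
    have hDne : ((β * T + 1) * Real.exp (β * T)) ^ 2 ≠ 0 := by positivity
    have hGlim : Tendsto (fun x : ℝ => (β * T + 2) * Gn x / Gd x - 1) atTop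
        (𝓝 (β * T / (2 * (β * T + 1) ^ 2))) := by
      have h : Tendsto (fun x : ℝ => (β * T + 2) * Gn x / Gd x - 1) atTop
          (𝓝 ((β * T + 2) * ((β * T + 1 / 2) * Real.exp (2 * (β * T)))
              / ((β * T + 1) * Real.exp (β * T)) ^ 2 - 1)) :=
        ((hGn.const_mul _).div hGd hDne).sub tendsto_const_nhds
      have hval : (β * T + 2) * ((β * T + 1 / 2) * Real.exp (2 * (β * T)))
              / ((β * T + 1) * Real.exp (β * T)) ^ 2 - 1
          = β * T / (2 * (β * T + 1) ^ 2) := by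
        have hexp2 : Real.exp (2 * (β * T)) = Real.exp (β * T) ^ 2 := by
          rw [two_mul, Real.exp_add]; ring
        have he : Real.exp (β * T) ≠ 0 := (Real.exp_pos _).ne'
        have hb1 : β * T + 1 ≠ 0 := by positivity
        rw [hexp2]
        field_simp
        ring
      rwa [hval] at h
    have hcomp : Tendsto (fun N : ℕ => (β * T + 2) * Gn (N : ℝ) / Gd (N : ℝ) - 1) atTop
        (𝓝 (β * T / (2 * (β * T + 1) ^ 2))) :=
      hGlim.comp tendsto_natCast_atTop_atTop
    refine Tendsto.congr' ?_ hcomp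
    filter_upwards [eventually_ge_atTop 2] with N hN
    have hn2 : (2:ℝ) ≤ (N:ℝ) := by exact_mod_cast hN
    have hn0 : (N:ℝ) ≠ 0 := by positivity
    have hn1 : ((N:ℝ) - 1) ≠ 0 := by intro h; nlinarith
    have hnum : (β * T + 2) * Gn (N:ℝ) =
        ((β * T + 2) * ((N : ℝ) ^ 2 * ((N : ℝ) + 1)
        * (((β * T + 1 / 2) * ((N : ℝ) + 1) + 3)
            * Real.exp (2 * (β * ((N : ℝ) + 1) * T / ((N : ℝ) - 1)))
          - 2 * ((N : ℝ) - 1) / (N : ℝ) ^ 2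
            * ((N : ℝ) * Real.exp (β * ((N : ℝ) + 1) * T / ((N : ℝ) - 1)) + 1 / 4)))) / (N:ℝ) ^ 4 := by
      rw [hGnDef]
      field_simp
    have hden : Gd (N:ℝ) =
        (((N : ℝ) * ((β * T + 1) * ((N : ℝ) + 1) + 2)
          * Real.exp (β * ((N : ℝ) + 1) * T / ((N : ℝ) - 1)) - ((N : ℝ) - 1)) ^ 2) / (N:ℝ) ^ 4 := by
      rw [hGdDef]
      field_simp
    unfold CoA
    rw [hnum, hden, ← div_aux _ _ ((N:ℝ) ^ 4) (by positivity)]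
  · intro N hN T hT
    constructor
    · have hn2 : (2:ℝ) ≤ (N:ℝ) := by exact_mod_cast hN
      have hn0 : (N:ℝ) ≠ 0 := by positivity
      have hval : CoA N 0 T = 0 := by
        have hd : ((N:ℝ) * ((0 * T + 1) * ((N:ℝ) + 1) + 2)
            * Real.exp (0 * ((N : ℝ) + 1) * T / ((N : ℝ) - 1)) - ((N : ℝ) - 1)) ^ 2
            = (((N:ℝ)+1)^2)^2 := by
          simp [Real.exp_zero]; ring
        simp only [CoA, hd]
        rw [sub_eq_zero]
        rw [div_eq_one_iff_eq (by positivity)]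
        field_simp
        simp only [zero_mul, zero_div, Real.exp_zero]
        ring
      have hc : ContinuousAt (fun β : ℝ => CoA N β T) 0 := by
        have hdne : ((N:ℝ) * ((0 * T + 1) * ((N:ℝ) + 1) + 2)
            * Real.exp (0 * ((N : ℝ) + 1) * T / ((N : ℝ) - 1)) - ((N : ℝ) - 1)) ^ 2 ≠ 0 := by
          have : ((N:ℝ) * ((0 * T + 1) * ((N:ℝ) + 1) + 2)
            * Real.exp (0 * ((N : ℝ) + 1) * T / ((N : ℝ) - 1)) - ((N : ℝ) - 1)) ^ 2
            = (((N:ℝ)+1)^2)^2 := by simp [Real.exp_zero]; ring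
          rw [this]; positivity
        unfold CoA
        refine ContinuousAt.sub (ContinuousAt.div ?_ ?_ hdne) continuousAt_const
        · fun_prop
        · fun_prop
      have h2 : Tendsto (fun β : ℝ => CoA N β T) (𝓝[>] 0) (𝓝 (CoA N 0 T)) :=
        hc.tendsto.mono_left nhdsWithin_le_nhds
      rwa [hval] at h2
    · have hn2 : (2:ℝ) ≤ (N:ℝ) := by exact_mod_cast hN
      have hn0 : (N:ℝ) ≠ 0 := by positivity
      have hn1 : (0:ℝ) < (N:ℝ) - 1 := by linarith
      set n : ℝ := (N : ℝ) with hn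
      set k : ℝ := (n + 1) * T / (n - 1) with hk
      have hkpos : 0 < k := by
        apply div_pos (by nlinarith) hn1
      set u : ℝ → ℝ := fun β => Real.exp (k * β) with hu
      have hupos : ∀ β, 0 < u β := fun β => Real.exp_pos _
      have huT : Tendsto u atTop atTop :=
        Real.tendsto_exp_atTop.comp (Tendsto.const_mul_atTop hkpos tendsto_id)
      -- numerator and denominator after dividing by (β u)²
      set Fn : ℝ → ℝ := fun β => n ^ 2 * (n + 1) *
          ((β * T + 2) / β * (((β * T + 1 / 2) * (n + 1) + 3) / β)
            - (β * T + 2) / β ^ 2 * (2 * (n - 1) / n ^ 2) * (n / u β + 1 / (4 * u β ^ 2)))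
        with hFn
      set Fd : ℝ → ℝ := fun β => (n * ((β * T + 1) * (n + 1) + 2) / β - (n - 1) / (β * u β)) ^ 2
        with hFd
      have heq : ∀ᶠ β in atTop, CoA N β T = Fn β / Fd β - 1 := by
        filter_upwards [eventually_gt_atTop 0] with β hβ
        have hβ0 : β ≠ 0 := ne_of_gt hβ
        have hu0 : u β ≠ 0 := ne_of_gt (hupos β)
        have harg : β * (n + 1) * T / (n - 1) = k * β := by rw [hk]; ring
        have h2 : Real.exp (2 * (k * β)) = u β ^ 2 := by
          rw [two_mul, Real.exp_add]; simp [hu]; ring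
        unfold CoA
        rw [← hn, harg, h2]
        rw [div_aux _ _ ((β * u β) ^ 2) (by positivity)]
        congr 1
        · congr 1
          · rw [hFn]; field_simp; simp only [hu, mul_comm β k]
          · rw [hFd]; field_simp; simp only [hu, mul_comm β k]
      set L : ℝ := n ^ 2 * (n + 1) * (T * (T * (n + 1)) - 0 * (2 * (n - 1) / n ^ 2) * (0 + 0))
        with hL
      have hFnT : Tendsto Fn atTop (𝓝 L) := by
        apply Tendsto.const_mul
        apply Tendsto.sub
        · exact (lin_div T 2).mul
            ((lin_div (T * (n + 1)) ((n + 1) / 2 + 3)).congr (by intro x; ring_nf))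
        · refine (Tendsto.mul (Tendsto.mul (lin_div_sq T 2) tendsto_const_nhds) ?_)
          apply Tendsto.add
          · exact Tendsto.div_atTop tendsto_const_nhds huT
          · refine Tendsto.div_atTop tendsto_const_nhds ?_
            refine Tendsto.const_mul_atTop (by norm_num) ?_
            exact (huT.atTop_mul_atTop₀ huT).congr (fun x => (pow_two (u x)).symm)
      set M : ℝ := (n * (T * (n + 1)) - 0) ^ 2 with hM
      have hFdT : Tendsto Fd atTop (𝓝 M) := by
        apply Tendsto.pow
        apply Tendsto.sub
        · exact (lin_div (n * (T * (n + 1))) (n * ((n + 1) + 2))).congr (by intro x; ring_nf)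
        · exact Tendsto.div_atTop tendsto_const_nhds
            (Tendsto.atTop_mul_atTop₀ tendsto_id huT)
      have hM0 : M ≠ 0 := by
        rw [hM]; simp only [sub_zero]
        positivity
      have hfin : Tendsto (fun β => Fn β / Fd β - 1) atTop (𝓝 (L / M - 1)) :=
        (hFnT.div hFdT hM0).sub tendsto_const_nhds
      have hLM : L / M - 1 = 0 := by
        rw [hL, hM]
        rw [sub_eq_zero, div_eq_one_iff_eq hM0, hM]
        ring
      rw [hLM] at hfin
      exact Tendsto.congr' (Filter.EventuallyEq.symm heq) hfin
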